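/- arXiv:2506.12151 — 2 statements merged into one kernel-verified Lean document; each statement's English description precedes it below -/
import Mathlib

section
/- Let F, G, H be finite simple graphs with at least one vertex each such that hom(F,G) > 0 and hom(G,H) > 0. Then hom(F,H) > 0 and C(F,H) ≤ C(F,G) · C(G,H). -/
open SimpleGraph

/-- The homomorphism density `t(G,T)`. -/
noncomputable def homDensity {α β : Type*} [Fintype α] [Fintype β]
    (G : SimpleGraph α) (T : SimpleGraph β) : ℝ :=
  (Nat.card (G →g T) : ℝ) / (Fintype.card β : ℝ) ^ (Fintype.card α)
/-- The set of real exponents `c ≥ 0` such that `t(G,T) ≥ t(H,T)^c` for all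
finite graphs `T` with at least one vertex. -/
def domSet {α β : Type*} [Fintype α] [Fintype β]
    (G : SimpleGraph α) (H : SimpleGraph β) : Set ℝ :=
  {c : ℝ | 0 ≤ c ∧ ∀ (n : ℕ), 0 < n → ∀ T : SimpleGraph (Fin n),
    homDensity H T ^ c ≤ homDensity G T}

/-- The homomorphism density domination exponent `C(G,H)`, as the infimum of `domSet G H`. -/
noncomputable def domExp {α β : Type*} [Fintype α] [Fintype β]
    (G : SimpleGraph α) (H : SimpleGraph β) : ℝ :=
  sInf (domSet G H)


open SimpleGraph Finset

private def IsHomF {α β : Type*} (F : SimpleGraph α) (T : SimpleGraph β) (φ : α → β) : Prop :=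
  ∀ ⦃u v⦄, F.Adj u v → T.Adj (φ u) (φ v)

private def homEquiv {α β : Type*} (F : SimpleGraph α) (T : SimpleGraph β) :
    (F →g T) ≃ {φ : α → β // IsHomF F T φ} where
  toFun f := ⟨f, fun _ _ h => f.map_rel h⟩
  invFun φ := ⟨φ.1, fun h => φ.2 h⟩
  left_inv f := rfl
  right_inv φ := rfl

private lemma card_hom_eq {α β : Type*} [Fintype α] [Fintype β] [DecidableEq α]
    (F : SimpleGraph α) (T : SimpleGraph β) [DecidablePred (IsHomF F T)] :
    Nat.card (F →g T) = (univ.filter (IsHomF F T)).card := by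
  rw [Nat.card_congr (homEquiv F T), Nat.card_eq_fintype_card, Fintype.card_subtype]

private lemma hom_finite {α β : Type*} [Finite α] [Finite β]
    (F : SimpleGraph α) (T : SimpleGraph β) : Finite (F →g T) :=
  Finite.of_injective (fun f => (f : α → β)) DFunLike.coe_injective

private lemma homDensity_nonneg {α β : Type*} [Fintype α] [Fintype β]
    (F : SimpleGraph α) (T : SimpleGraph β) : 0 ≤ homDensity F T := by
  unfold homDensity; positivity

private lemma card_hom_le {α β : Type*} [Fintype α] [Fintype β]
    (F : SimpleGraph α) (T : SimpleGraph β) :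
    Nat.card (F →g T) ≤ Fintype.card β ^ Fintype.card α := by
  classical
  calc Nat.card (F →g T) ≤ Nat.card (α → β) := by
        haveI := hom_finite F T
        exact Nat.card_le_card_of_injective _ DFunLike.coe_injective
    _ = Fintype.card β ^ Fintype.card α := by
        rw [Nat.card_eq_fintype_card, Fintype.card_fun]

private lemma homDensity_le_one {α β : Type*} [Fintype α] [Fintype β]
    (F : SimpleGraph α) (T : SimpleGraph β) (hb : 0 < Fintype.card β) :
    homDensity F T ≤ 1 := by
  unfold homDensity
  rw [div_le_one (by positivity)]
  exact_mod_cast card_hom_le F T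


section
variable {α β : Type*} [Fintype α] [Fintype β] {F : SimpleGraph α} {G : SimpleGraph β}

private lemma base_count (f : F →g G)
    (hinj : ∀ u v, (∃ w, F.Adj u w) → (∃ w, F.Adj v w) → f u = f v → u = v)
    {n : ℕ} (hn : 0 < n) (T : SimpleGraph (Fin n)) :
    Nat.card (G →g T) * n ^ Fintype.card α ≤ Nat.card (F →g T) * n ^ Fintype.card β := by
  classical
  set p : α → Prop := fun v => ∃ w, F.Adj v w with hp
  set fB : {v : α // p v} → β := fun v => f v.1 with hfB
  have hfBinj : Function.Injective fB := by
    rintro ⟨u, hu⟩ ⟨v, hv⟩ h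
    exact Subtype.ext (hinj u v hu hv h)
  set q : β → Prop := fun w => w ∈ Set.range fB with hq
  -- the injection
  set Θ : (G →g T) × ({v : α // ¬ p v} → Fin n) →
      (F →g T) × ({w : β // ¬ q w} → Fin n) := fun gh =>
    (⟨fun v => if hv : p v then gh.1 (f v) else gh.2 ⟨v, hv⟩, by
        intro u v huv
        have hu : p u := ⟨v, huv⟩
        have hv : p v := ⟨u, huv.symm⟩
        simp only [dif_pos hu, dif_pos hv]
        exact gh.1.map_rel (f.map_rel huv)⟩,
      fun w => gh.1 w.1) with hΘ
  have hΘinj : Function.Injective Θ := by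
    rintro ⟨g, h⟩ ⟨g', h'⟩ he
    have h1 := congrArg Prod.fst he
    have h2 := congrArg Prod.snd he
    simp only [hΘ] at h1 h2
    have h1' : ∀ v : α, (if hv : p v then g (f v) else h ⟨v, hv⟩)
        = (if hv : p v then g' (f v) else h' ⟨v, hv⟩) := fun v =>
      congrFun (congrArg (fun (k : F →g T) => (k : α → Fin n)) h1) v
    rw [Prod.mk.injEq]
    constructor
    · ext w
      by_cases hw : q w
      · obtain ⟨⟨v, hv⟩, rfl⟩ := hw
        have := h1' v
        simp only [dif_pos hv] at this
        exact congrArg Fin.val this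
      · exact congrArg Fin.val (congrFun h2 ⟨w, hw⟩)
    · ext ⟨v, hv⟩
      have := h1' v
      simp only [dif_neg hv] at this
      exact congrArg Fin.val this
  -- counting
  haveI : Finite (F →g T) := Finite.of_injective (fun f => (f : α → Fin n)) DFunLike.coe_injective
  haveI : Finite (G →g T) := Finite.of_injective (fun f => (f : β → Fin n)) DFunLike.coe_injective
  have hcard := Nat.card_le_card_of_injective Θ hΘinj
  rw [Nat.card_prod, Nat.card_prod] at hcard
  have cIa : Nat.card ({v : α // ¬ p v} → Fin n) = n ^ Fintype.card {v : α // ¬ p v} := by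
    rw [Nat.card_eq_fintype_card, Fintype.card_fun, Fintype.card_fin]
  have cKb : Nat.card ({w : β // ¬ q w} → Fin n) = n ^ Fintype.card {w : β // ¬ q w} := by
    rw [Nat.card_eq_fintype_card, Fintype.card_fun, Fintype.card_fin]
  rw [cIa, cKb] at hcard
  have hsum1 : Fintype.card {v : α // p v} + Fintype.card {v : α // ¬ p v} = Fintype.card α := by
    rw [← Fintype.card_sum]
    exact Fintype.card_congr (Equiv.sumCompl p)
  have hrange : Fintype.card {w : β // q w} = Fintype.card {v : α // p v} := by
    have e : {v : α // p v} ≃ {w : β // q w} := Equiv.ofInjective fB hfBinj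
    exact (Fintype.card_congr e).symm
  have hsum2 : Fintype.card {v : α // p v} + Fintype.card {w : β // ¬ q w} = Fintype.card β := by
    rw [← hrange, ← Fintype.card_sum]
    exact Fintype.card_congr (Equiv.sumCompl q)
  calc Nat.card (G →g T) * n ^ Fintype.card α
      = Nat.card (G →g T) * n ^ Fintype.card {v : α // ¬ p v} * n ^ Fintype.card {v : α // p v} := by
        rw [mul_assoc, ← pow_add, Nat.add_comm, hsum1]
    _ ≤ Nat.card (F →g T) * n ^ Fintype.card {w : β // ¬ q w} * n ^ Fintype.card {v : α // p v} :=
        Nat.mul_le_mul_right _ hcard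
    _ = Nat.card (F →g T) * n ^ Fintype.card β := by
        rw [mul_assoc, ← pow_add, Nat.add_comm, hsum2]
end

private def mergeFun {α : Type*} [DecidableEq α] (x y : α) : α → α :=
  fun v => if v = y then x else v

private def mergeGraph {α : Type*} [DecidableEq α] (F : SimpleGraph α) (x y : α) :
    SimpleGraph α :=
  SimpleGraph.fromRel (fun u v => ∃ p q, F.Adj p q ∧ mergeFun x y p = u ∧ mergeFun x y q = v)

section
variable {α : Type*} [DecidableEq α] {x y : α}

private lemma mergeFun_ne (hxy : x ≠ y) (v : α) : mergeFun x y v ≠ y := by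
  unfold mergeFun; split <;> simp_all

private lemma mergeFun_eq_self {v : α} (hv : v ≠ y) : mergeFun x y v = v := if_neg hv

private lemma mergeFun_y : mergeFun x y y = x := if_pos rfl

variable {F : SimpleGraph α}

private lemma merge_adj_of_adj (hxy : x ≠ y) (hnadj : ¬ F.Adj x y) {u v : α} (h : F.Adj u v) :
    (mergeGraph F x y).Adj (mergeFun x y u) (mergeFun x y v) := by
  have hne : mergeFun x y u ≠ mergeFun x y v := by
    unfold mergeFun
    split <;> split <;> simp_all [F.ne_of_adj h]
    · exact fun e => hnadj (e ▸ h).symm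
    · exact fun e => hnadj (e ▸ h)
  exact ⟨hne, Or.inl ⟨u, v, h, rfl, rfl⟩⟩

private lemma merge_adj_elim {u v : α} (h : (mergeGraph F x y).Adj u v) :
    ∃ p q, F.Adj p q ∧ mergeFun x y p = u ∧ mergeFun x y q = v := by
  obtain ⟨hne, h | h⟩ := h
  · exact h
  · obtain ⟨p, q, hpq, h1, h2⟩ := h
    exact ⟨q, p, hpq.symm, h2, h1⟩

/-- `y` is isolated in the merge graph. -/
private lemma merge_isolated (hxy : x ≠ y) (w : α) : ¬ (mergeGraph F x y).Adj y w := by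
  intro h
  obtain ⟨p, q, _, h1, _⟩ := merge_adj_elim h
  exact mergeFun_ne hxy p h1

/-- a hom `f : F →g G` with `f x = f y` is also a hom from the merge graph. -/
private def mergeHom {β : Type*} {G : SimpleGraph β} (hxy : x ≠ y)
    (f : F →g G) (hf : f x = f y) : mergeGraph F x y →g G where
  toFun := f
  map_rel' := by
    intro a b h
    obtain ⟨p, q, hpq, h1, h2⟩ := merge_adj_elim h
    have key : ∀ v, f (mergeFun x y v) = f v := by
      intro v; unfold mergeFun; split
      · simp_all
      · rfl
    rw [← h1, ← h2, key, key]
    exact f.map_rel hpq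

/-- non-isolated vertices of the merge graph. -/
private lemma merge_nonisolated_card [Fintype α] (hxy : x ≠ y)
    (hx : ∃ w, F.Adj x w) (hy : ∃ w, F.Adj y w) :
    Nat.card {v : α // ∃ w, (mergeGraph F x y).Adj v w} + 1 ≤
      Nat.card {v : α // ∃ w, F.Adj v w} := by
  classical
  rw [Nat.card_eq_fintype_card, Nat.card_eq_fintype_card, Fintype.card_subtype,
    Fintype.card_subtype]
  set N : Finset α := univ.filter (fun v => ∃ w, F.Adj v w) with hN
  have hyN : y ∈ N := by simp [hN, hy]
  have hsub : univ.filter (fun v => ∃ w, (mergeGraph F x y).Adj v w) ⊆ N.erase y := by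
    intro v hv
    simp only [mem_filter, mem_univ, true_and] at hv
    obtain ⟨w, hw⟩ := hv
    refine Finset.mem_erase.2 ⟨?_, ?_⟩
    · rintro rfl
      exact merge_isolated hxy w hw
    · obtain ⟨p, q, hpq, h1, _⟩ := merge_adj_elim hw
      simp only [hN, mem_filter, mem_univ, true_and]
      by_cases hp : p = y
      · subst hp
        rw [mergeFun_y] at h1
        exact h1 ▸ hx
      · rw [mergeFun_eq_self hp] at h1
        exact h1 ▸ ⟨q, hpq⟩
  calc (univ.filter (fun v => ∃ w, (mergeGraph F x y).Adj v w)).card + 1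
      ≤ (N.erase y).card + 1 := by exact Nat.add_le_add_right (Finset.card_le_card hsub) 1
    _ = N.card := by
        rw [Finset.card_erase_of_mem hyN]
        exact Nat.succ_pred_eq_of_pos (Finset.card_pos.2 ⟨y, hyN⟩)
end

section
variable {α : Type*} [DecidableEq α] {x y : α} {F : SimpleGraph α}

private lemma merge_count [Fintype α] (hxy : x ≠ y) (hnadj : ¬ F.Adj x y)
    {n : ℕ} (T : SimpleGraph (Fin n)) :
    Nat.card (mergeGraph F x y →g T) ≤
      n * Nat.card {φ : α → Fin n // IsHomF F T φ ∧ φ x = φ y} := by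
  classical
  set D := {φ : α → Fin n // IsHomF F T φ ∧ φ x = φ y} with hD
  set Θ : (mergeGraph F x y →g T) → Fin n × D := fun f' =>
    (f' y, ⟨fun v => f' (mergeFun x y v), fun u v huv =>
        f'.map_rel (merge_adj_of_adj hxy hnadj huv), by
      simp [mergeFun, hxy.symm]⟩) with hΘ
  have hΘinj : Function.Injective Θ := by
    intro f₁ f₂ he
    have h1 : f₁ y = f₂ y := congrArg Prod.fst he
    have h2 : ∀ v, f₁ (mergeFun x y v) = f₂ (mergeFun x y v) := fun v =>
      congrFun (congrArg (fun (d : D) => (d.1 : α → Fin n)) (congrArg Prod.snd he)) v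
    ext v
    by_cases hv : v = y
    · subst hv; exact congrArg Fin.val h1
    · have := h2 v
      rw [mergeFun_eq_self hv] at this
      exact congrArg Fin.val this
  haveI : Finite (mergeGraph F x y →g T) :=
    Finite.of_injective (fun f => (f : α → Fin n)) DFunLike.coe_injective
  have := Nat.card_le_card_of_injective Θ hΘinj
  rwa [Nat.card_prod, Nat.card_eq_fintype_card (α := Fin n), Fintype.card_fin] at this

private lemma card_pair (hxy : x ≠ y) [Fintype α] :
    Fintype.card {v : α // v ≠ x ∧ v ≠ y} + 2 = Fintype.card α := by
  classical
  rw [Fintype.card_subtype]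
  have hfil : univ.filter (fun v : α => v ≠ x ∧ v ≠ y) = univ \ {x, y} := by
    ext v; simp [and_comm]
  have hcard2 : ({x, y} : Finset α).card = 2 := by
    rw [Finset.card_insert_of_notMem (by simp [hxy]), Finset.card_singleton]
  rw [hfil, Finset.card_sdiff_of_subset (Finset.subset_univ _), hcard2, Finset.card_univ]
  have h2le : 2 ≤ Fintype.card α := by
    rw [← hcard2, ← Finset.card_univ]
    exact Finset.card_le_card (Finset.subset_univ _)
  omega

private lemma merge_CS [Fintype α] (hxy : x ≠ y) (hnadj : ¬ F.Adj x y)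
    {n : ℕ} (T : SimpleGraph (Fin n)) :
    Nat.card {φ : α → Fin n // IsHomF F T φ ∧ φ x = φ y} ^ 2 * n ^ 2 ≤
      Nat.card (F →g T) * n ^ Fintype.card α := by
  classical
  set R := {v : α // v ≠ x ∧ v ≠ y} with hR
  set ρ : (α → Fin n) → (R → Fin n) := fun φ r => φ r.1 with hρ
  set Dset : Finset (α → Fin n) := univ.filter (fun φ => IsHomF F T φ ∧ φ x = φ y) with hDset
  set HomF : Finset (α → Fin n) := univ.filter (IsHomF F T) with hHomF
  have hDcard : Nat.card {φ : α → Fin n // IsHomF F T φ ∧ φ x = φ y} = Dset.card := by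
    rw [Nat.card_eq_fintype_card, Fintype.card_subtype]
  have hFcard : Nat.card (F →g T) = HomF.card := by
    rw [Nat.card_congr ((⟨fun f => ⟨f, fun _ _ h => f.map_rel h⟩, fun φ => ⟨φ.1, fun h => φ.2 h⟩,
      fun _ => rfl, fun _ => rfl⟩ : (F →g T) ≃ {φ : α → Fin n // IsHomF F T φ})),
      Nat.card_eq_fintype_card, Fintype.card_subtype]
  set w : (R → Fin n) → ℕ := fun g => (Dset.filter (fun φ => ρ φ = g)).card with hw
  have h1 : Dset.card = ∑ g : R → Fin n, w g :=
    Finset.card_eq_sum_card_fiberwise (fun φ _ => Finset.mem_univ (ρ φ))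
  have h2 : Dset.card ^ 2 ≤ (Finset.univ : Finset (R → Fin n)).card * ∑ g : R → Fin n, w g ^ 2 := by
    rw [h1]; exact sq_sum_le_card_mul_sum_sq
  have h3 : ∀ g : R → Fin n, w g ^ 2 ≤ (HomF.filter (fun φ => ρ φ = g)).card := by
    intro g
    have hsq : w g ^ 2
        = ((Dset.filter (fun φ => ρ φ = g)) ×ˢ (Dset.filter (fun φ => ρ φ = g))).card := by
      rw [Finset.card_product, sq]
    rw [hsq]
    apply Finset.card_le_card_of_injOn (fun pr => Function.update pr.1 y (pr.2 y))
    · rintro ⟨φ, ψ⟩ hpr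
      rw [Finset.mem_coe, Finset.mem_product] at hpr
      obtain ⟨hφ, hψ⟩ := hpr
      simp only [hDset, Finset.mem_filter, Finset.mem_univ, true_and] at hφ hψ
      obtain ⟨⟨hφhom, hφeq⟩, hφρ⟩ := hφ
      obtain ⟨⟨hψhom, hψeq⟩, hψρ⟩ := hψ
      have hagree : ∀ v : α, v ≠ x → v ≠ y → φ v = ψ v := by
        intro v h1 h2
        have : ρ φ ⟨v, h1, h2⟩ = ρ ψ ⟨v, h1, h2⟩ := by rw [hφρ, hψρ]
        exact this
      have hmain : Function.update φ y (ψ y) ∈ HomF.filter (fun φ => ρ φ = g) := by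
        simp only [hHomF, Finset.mem_filter, Finset.mem_univ, true_and]
        constructor
        · intro u v huv
          by_cases hu : u = y
          · have hv : v ≠ y := hu ▸ (F.ne_of_adj huv).symm
            have hvx : v ≠ x := fun e => hnadj (F.adj_symm ((hu ▸ e ▸ huv : F.Adj y x)))
            rw [hu, Function.update_self, Function.update_of_ne hv, hagree v hvx hv]
            exact hψhom (hu ▸ huv)
          · by_cases hv : v = y
            · have hux : u ≠ x := fun e => hnadj ((hv ▸ e ▸ huv : F.Adj x y))
              rw [hv, Function.update_self, Function.update_of_ne hu, hagree u hux hu]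
              exact hψhom (hv ▸ huv)
            · rw [Function.update_of_ne hu, Function.update_of_ne hv]
              exact hφhom huv
        · funext r
          show Function.update φ y (ψ y) r.1 = g r
          rw [Function.update_of_ne r.2.2]
          exact congrFun hφρ r
      exact hmain
    · rintro ⟨φ, ψ⟩ hpr ⟨φ', ψ'⟩ hpr' he
      have he' : Function.update φ y (ψ y) = Function.update φ' y (ψ' y) := he
      simp only [Finset.coe_product, Set.mem_prod, Finset.mem_coe, hDset, Finset.mem_filter,
        Finset.mem_univ, true_and] at hpr hpr'
      obtain ⟨⟨⟨hφhom, hφeq⟩, hφρ⟩, ⟨hψhom, hψeq⟩, hψρ⟩ := hpr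
      obtain ⟨⟨⟨hφhom', hφeq'⟩, hφρ'⟩, ⟨hψhom', hψeq'⟩, hψρ'⟩ := hpr'
      have hagree : ∀ v : α, v ≠ x → v ≠ y → ψ v = ψ' v := by
        intro v h1 h2
        have : ρ ψ ⟨v, h1, h2⟩ = ρ ψ' ⟨v, h1, h2⟩ := by rw [hψρ, hψρ']
        exact this
      have hxval : φ x = φ' x := by
        have := congrFun he' x
        rwa [Function.update_of_ne hxy, Function.update_of_ne hxy] at this
      have hyval : ψ y = ψ' y := by
        have := congrFun he' y
        rwa [Function.update_self, Function.update_self] at this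
      have hφ'' : φ = φ' := by
        funext v
        by_cases hv : v = y
        · rw [hv, ← hφeq, ← hφeq']; exact hxval
        · have := congrFun he' v
          rwa [Function.update_of_ne hv, Function.update_of_ne hv] at this
      have hψ'' : ψ = ψ' := by
        funext v
        by_cases hv : v = y
        · rw [hv]; exact hyval
        · by_cases hvx : v = x
          · rw [hvx, hψeq, hψeq']; exact hyval
          · exact hagree v hvx hv
      exact Prod.ext hφ'' hψ''
  have h4 : ∑ g : R → Fin n, (HomF.filter (fun φ => ρ φ = g)).card = HomF.card :=
    (Finset.card_eq_sum_card_fiberwise (fun φ _ => Finset.mem_univ (ρ φ))).symm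
  have h5 : Dset.card ^ 2 ≤ n ^ Fintype.card R * HomF.card := by
    calc Dset.card ^ 2 ≤ (Finset.univ : Finset (R → Fin n)).card * ∑ g : R → Fin n, w g ^ 2 := h2
      _ ≤ (Finset.univ : Finset (R → Fin n)).card
            * ∑ g : R → Fin n, (HomF.filter (fun φ => ρ φ = g)).card :=
          Nat.mul_le_mul_left _ (Finset.sum_le_sum (fun g _ => h3 g))
      _ = n ^ Fintype.card R * HomF.card := by
          rw [h4, Finset.card_univ, Fintype.card_fun, Fintype.card_fin]
  rw [hDcard, hFcard]
  calc Dset.card ^ 2 * n ^ 2 ≤ (n ^ Fintype.card R * HomF.card) * n ^ 2 :=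
        Nat.mul_le_mul_right _ h5
    _ = HomF.card * n ^ Fintype.card α := by
        rw [← card_pair (x := x) (y := y) hxy, pow_add]; ring
end

-- now the new material
private lemma base_density {α β : Type*} [Fintype α] [Fintype β]
    {F : SimpleGraph α} {G : SimpleGraph β} (f : F →g G)
    (hinj : ∀ u v, (∃ w, F.Adj u w) → (∃ w, F.Adj v w) → f u = f v → u = v)
    {n : ℕ} (hn : 0 < n) (T : SimpleGraph (Fin n)) :
    homDensity G T ≤ homDensity F T := by
  have h := base_count f hinj hn T
  unfold homDensity
  rw [Fintype.card_fin, div_le_div_iff₀ (by positivity) (by positivity)]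
  have hn' : (0:ℝ) < n := by exact_mod_cast hn
  exact_mod_cast h

private lemma merge_density {α : Type*} [DecidableEq α] {x y : α} {F : SimpleGraph α}
    [Fintype α] (hxy : x ≠ y) (hnadj : ¬ F.Adj x y) {n : ℕ} (hn : 0 < n)
    (T : SimpleGraph (Fin n)) :
    homDensity (mergeGraph F x y) T ^ 2 ≤ homDensity F T := by
  have key : Nat.card (mergeGraph F x y →g T) ^ 2
      ≤ Nat.card (F →g T) * n ^ Fintype.card α := by
    calc Nat.card (mergeGraph F x y →g T) ^ 2
        ≤ (n * Nat.card {φ : α → Fin n // IsHomF F T φ ∧ φ x = φ y}) ^ 2 :=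
          Nat.pow_le_pow_left (merge_count hxy hnadj T) 2
      _ = Nat.card {φ : α → Fin n // IsHomF F T φ ∧ φ x = φ y} ^ 2 * n ^ 2 := by ring
      _ ≤ Nat.card (F →g T) * n ^ Fintype.card α := merge_CS hxy hnadj T
  unfold homDensity
  rw [Fintype.card_fin, div_pow, div_le_div_iff₀ (by positivity) (by positivity)]
  have hn' : (0:ℝ) < n := by exact_mod_cast hn
  have key' : (Nat.card (mergeGraph F x y →g T) : ℝ) ^ 2
      ≤ (Nat.card (F →g T) : ℝ) * (n:ℝ) ^ Fintype.card α := by exact_mod_cast key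
  calc (Nat.card (mergeGraph F x y →g T) : ℝ) ^ 2 * (n:ℝ) ^ Fintype.card α
      ≤ ((Nat.card (F →g T) : ℝ) * (n:ℝ) ^ Fintype.card α) * (n:ℝ) ^ Fintype.card α := by
        apply mul_le_mul_of_nonneg_right key' (by positivity)
    _ = (Nat.card (F →g T) : ℝ) * ((n:ℝ) ^ Fintype.card α) ^ 2 := by ring

private lemma main_ind {α β : Type*} [Fintype α] [Fintype β]
    (G : SimpleGraph β) {n : ℕ} (hn : 0 < n) (T : SimpleGraph (Fin n)) :
    ∀ (m : ℕ) (F : SimpleGraph α) (f : F →g G),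
      Nat.card {v : α // ∃ w, F.Adj v w} ≤ m →
      homDensity G T ^ (2 ^ m) ≤ homDensity F T := by
  classical
  intro m
  induction m with
  | zero =>
    intro F f hm
    haveI : Finite {v : α // ∃ w, F.Adj v w} := Subtype.finite
    have hempty : IsEmpty {v : α // ∃ w, F.Adj v w} := by
      rcases Nat.card_eq_zero.1 (Nat.le_zero.1 hm) with h | h
      · exact h
      · exact absurd h (not_infinite_iff_finite.2 inferInstance)
    have hinj : ∀ u v, (∃ w, F.Adj u w) → (∃ w, F.Adj v w) → f u = f v → u = v := by
      intro u v hu _ _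
      exact (hempty.false ⟨u, hu⟩).elim
    simpa using base_density f hinj hn T
  | succ m ih =>
    intro F f hm
    by_cases hex : ∃ x y, x ≠ y ∧ f x = f y ∧ (∃ w, F.Adj x w) ∧ (∃ w, F.Adj y w)
    · obtain ⟨x, y, hxy, hfxy, hx, hy⟩ := hex
      have hnadj : ¬ F.Adj x y := fun h => (G.ne_of_adj (f.map_rel h)) hfxy
      have hm' : Nat.card {v : α // ∃ w, (mergeGraph F x y).Adj v w} ≤ m := by
        have := merge_nonisolated_card hxy hx hy; omega
      have ih' := ih (mergeGraph F x y) (mergeHom hxy f hfxy) hm'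
      calc homDensity G T ^ 2 ^ (m + 1) = (homDensity G T ^ 2 ^ m) ^ 2 := by
            rw [← pow_mul, pow_succ]
        _ ≤ (homDensity (mergeGraph F x y) T) ^ 2 :=
            pow_le_pow_left₀ (pow_nonneg (homDensity_nonneg G T) _) ih' 2
        _ ≤ homDensity F T := merge_density hxy hnadj hn T
    · push_neg at hex
      have hinj : ∀ u v, (∃ w, F.Adj u w) → (∃ w, F.Adj v w) → f u = f v → u = v := by
        intro u v hu hv hfe
        by_contra hne
        obtain ⟨w, hw⟩ := hv
        exact hex u v hne hfe hu w hw
      calc homDensity G T ^ 2 ^ (m + 1) ≤ homDensity G T ^ 1 :=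
            pow_le_pow_of_le_one (homDensity_nonneg G T)
              (homDensity_le_one G T (by simpa using hn)) Nat.one_le_two_pow
        _ = homDensity G T := pow_one _
        _ ≤ homDensity F T := base_density f hinj hn T

private lemma hom_finite' {α β : Type*} [Finite α] [Finite β]
    (F : SimpleGraph α) (T : SimpleGraph β) : Finite (F →g T) :=
  Finite.of_injective (fun f => (f : α → β)) DFunLike.coe_injective

private lemma exists_mem_domSet {α β : Type*} [Fintype α] [Fintype β]
    (F : SimpleGraph α) (G : SimpleGraph β) (f : F →g G) :
    ((2 ^ Fintype.card α : ℕ) : ℝ) ∈ domSet F G := by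
  classical
  refine ⟨by positivity, fun n hn T => ?_⟩
  rw [Real.rpow_natCast]
  apply main_ind G hn T (Fintype.card α) F f
  calc Nat.card {v : α // ∃ w, F.Adj v w} = Fintype.card {v : α // ∃ w, F.Adj v w} :=
        Nat.card_eq_fintype_card
    _ ≤ Fintype.card α := Fintype.card_subtype_le _

private lemma mul_mem_domSet {α β γ : Type*} [Fintype α] [Fintype β] [Fintype γ]
    {F : SimpleGraph α} {G : SimpleGraph β} {H : SimpleGraph γ} {c d : ℝ}
    (hc : c ∈ domSet F G) (hd : d ∈ domSet G H) : c * d ∈ domSet F H := by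
  refine ⟨mul_nonneg hc.1 hd.1, fun n hn T => ?_⟩
  have h1 : homDensity H T ^ (c * d) = (homDensity H T ^ d) ^ c := by
    rw [mul_comm, Real.rpow_mul (homDensity_nonneg H T)]
  rw [h1]
  calc (homDensity H T ^ d) ^ c ≤ (homDensity G T) ^ c :=
        Real.rpow_le_rpow (Real.rpow_nonneg (homDensity_nonneg H T) d) (hd.2 n hn T) hc.1
    _ ≤ homDensity F T := hc.2 n hn T


theorem stmt_2 {α β γ : Type*} [Fintype α] [Fintype β] [Fintype γ]
    [Nonempty α] [Nonempty β] [Nonempty γ]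
    (F : SimpleGraph α) (G : SimpleGraph β) (H : SimpleGraph γ)
    (hFG : 0 < Nat.card (F →g G)) (hGH : 0 < Nat.card (G →g H)) :
    0 < Nat.card (F →g H) ∧ domExp F H ≤ domExp F G * domExp G H := by
  obtain ⟨⟨f⟩, -⟩ := Nat.card_pos_iff.1 hFG
  obtain ⟨⟨g⟩, -⟩ := Nat.card_pos_iff.1 hGH
  constructor
  · exact Nat.card_pos_iff.2 ⟨⟨g.comp f⟩, hom_finite' F H⟩
  · -- infimum inequality
    have hFGne : (domSet F G).Nonempty := ⟨_, exists_mem_domSet F G f⟩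
    have hGHne : (domSet G H).Nonempty := ⟨_, exists_mem_domSet G H g⟩
    have hbddFH : BddBelow (domSet F H) := ⟨0, fun c hc => hc.1⟩
    simp only [domExp]
    set p := sInf (domSet F G) with hp
    set q := sInf (domSet G H) with hq
    set I := sInf (domSet F H) with hI
    have hp0 : 0 ≤ p := le_csInf hFGne (fun c hc => hc.1)
    have hq0 : 0 ≤ q := le_csInf hGHne (fun c hc => hc.1)
    have key : ∀ ε : ℝ, 0 < ε → I ≤ (p + ε) * (q + ε) := by
      intro ε hε
      obtain ⟨a, ha, halt⟩ := Real.lt_sInf_add_pos hFGne hε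
      obtain ⟨b, hb, hblt⟩ := Real.lt_sInf_add_pos hGHne hε
      calc I ≤ a * b := csInf_le hbddFH (mul_mem_domSet ha hb)
        _ ≤ (p + ε) * (q + ε) :=
            mul_le_mul (le_of_lt halt) (le_of_lt hblt) hb.1 (by linarith)
    by_contra hcon
    push_neg at hcon
    have hlt : p * q < I := hcon
    set ε : ℝ := min 1 ((I - p * q) / (2 * (p + q + 1))) with hε
    have hεpos : 0 < ε := by
      apply lt_min one_pos
      apply div_pos (by linarith) (by linarith)
    have hε1 : ε ≤ 1 := min_le_left _ _
    have hε2 : ε ≤ (I - p * q) / (2 * (p + q + 1)) := min_le_right _ _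
    have h2 : ε * (2 * (p + q + 1)) ≤ I - p * q := by
      rw [div_eq_mul_inv] at hε2
      have h3 : (0:ℝ) < 2 * (p + q + 1) := by linarith
      calc ε * (2 * (p + q + 1)) ≤ ((I - p * q) * (2 * (p + q + 1))⁻¹) * (2 * (p + q + 1)) :=
            mul_le_mul_of_nonneg_right hε2 (le_of_lt h3)
        _ = I - p * q := by field_simp
    have hkey := key ε hεpos
    nlinarith [sq_nonneg ε, hεpos, hε1, hp0, hq0]
end

section
/- Let G and H be connected finite simple graphs, each with at least two vertices (so each has at least one edge). If c is a real number such that t(G,T) ≥ t(H,T)^c for every finite simple graph T with at least one vertex, then c ≥ e(G)/e(H), c ≥ (v(G)−1)/(v(H)−1), and c ≥ v(G)/v(H). -/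
set_option maxHeartbeats 1000000
open SimpleGraph Finset

section counting
variable {V : Type*} [Fintype V] [DecidableEq V]

instance homFinite {W : Type*} [Finite W] (G : SimpleGraph V) (T : SimpleGraph W) :
    Finite (G →g T) :=
  Finite.of_injective (fun f => (f : V → W)) DFunLike.coe_injective

/-- homs to complete graph = functions injective on edges -/
lemma hom_top_card (F : SimpleGraph V) [DecidableRel F.Adj] (n : ℕ) :
    Nat.card (F →g (⊤ : SimpleGraph (Fin n)))
      = (univ.filter (fun f : V → Fin n => ∀ a b, F.Adj a b → f a ≠ f b)).card := by
  have e : (F →g (⊤ : SimpleGraph (Fin n))) ≃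
      {f : V → Fin n // ∀ a b, F.Adj a b → f a ≠ f b} :=
    { toFun := fun f => ⟨f, fun a b h => (f.map_rel h : _)⟩
      invFun := fun f => ⟨f.1, fun {a b} h => f.2 a b h⟩
      left_inv := fun f => rfl
      right_inv := fun f => rfl }
  rw [Nat.card_congr e, Nat.card_eq_fintype_card, Fintype.card_subtype]



variable (n : ℕ)

lemma card_badE {a b : V} (hab : a ≠ b) :
    (univ.filter (fun f : V → Fin n => f a = f b)).card = n ^ (Fintype.card V - 1) := by
  classical
  rw [← Fintype.card_subtype]
  have e : {f : V → Fin n // f a = f b} ≃ ({x : V // x ≠ b} → Fin n) :=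
    { toFun := fun f x => f.1 x.1
      invFun := fun g => ⟨fun x => if h : x = b then g ⟨a, hab⟩ else g ⟨x, h⟩, by
        simp [hab]⟩
      left_inv := fun f => by
        ext x
        by_cases h : x = b
        · subst h; simp [f.2]
        · simp [h]
      right_inv := fun g => by
        ext x
        simp [x.2] }
  rw [Fintype.card_congr e, Fintype.card_fun, Fintype.card_subtype_compl,
    Fintype.card_subtype_eq, Fintype.card_fin]

lemma card_bad2 {a b c d : V} (hab : a ≠ b) (hcd : c ≠ d) (hda : d ≠ a) (hdb : d ≠ b) :
    (univ.filter (fun f : V → Fin n => f a = f b ∧ f c = f d)).card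
      ≤ n ^ (Fintype.card V - 2) := by
  classical
  rw [← Fintype.card_subtype]
  have key : Fintype.card ({x : V // ¬(x = b ∨ x = d)} → Fin n) = n ^ (Fintype.card V - 2) := by
    rw [Fintype.card_fun, Fintype.card_subtype_compl, Fintype.card_fin]
    congr 1
    rw [Fintype.card_subtype]
    have : (univ.filter (fun x : V => x = b ∨ x = d)) = {b, d} := by
      ext x; simp [or_comm]
    rw [this, card_insert_of_notMem (by simp [hdb.symm]), card_singleton]
  rw [← key]
  apply Fintype.card_le_of_injective (fun f x => f.1 x.1)
  intro f g hfg
  have hval : ∀ x : V, x ≠ b → x ≠ d → f.1 x = g.1 x := fun x h1 h2 =>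
    congrFun hfg ⟨x, by simp [h1, h2]⟩
  have ha : f.1 a = g.1 a := hval a hab (Ne.symm hda)
  have hb : f.1 b = g.1 b := by rw [← f.2.1, ← g.2.1, ha]
  apply Subtype.ext
  funext x
  by_cases h1 : x = b
  · subst h1; rw [hb]
  by_cases h2 : x = d
  · subst h2
    rw [← f.2.2, ← g.2.2]
    by_cases hcb : c = b
    · subst hcb; exact hb
    · exact hval c hcb hcd
  · exact hval x h1 h2



lemma bonferroni {ι X : Type*} [DecidableEq ι] [DecidableEq X] (A : ι → Finset X) (s : Finset ι) :
    ∑ i ∈ s, (A i).card ≤ (s.biUnion A).card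
      + ∑ i ∈ s, ∑ j ∈ s.erase i, (A i ∩ A j).card := by
  induction s using Finset.induction_on with
  | empty => simp
  | @insert a s ha ih =>
    rw [sum_insert ha, biUnion_insert]
    have hcard : (A a ∪ s.biUnion A).card + (A a ∩ s.biUnion A).card
        = (A a).card + (s.biUnion A).card := card_union_add_card_inter _ _
    have hinter : (A a ∩ s.biUnion A).card ≤ ∑ j ∈ s, (A a ∩ A j).card := by
      have : A a ∩ s.biUnion A = s.biUnion (fun j => A a ∩ A j) := by
        ext x; simp [and_assoc, and_comm, and_left_comm]
        tauto
      rw [this]; exact card_biUnion_le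
    have h2 : ∑ j ∈ s, (A a ∩ A j).card + ∑ i ∈ s, ∑ j ∈ s.erase i, (A i ∩ A j).card
        ≤ ∑ i ∈ insert a s, ∑ j ∈ (insert a s).erase i, (A i ∩ A j).card := by
      rw [sum_insert ha, erase_insert ha]
      exact Nat.add_le_add_left (sum_le_sum fun i _ =>
        sum_le_sum_of_subset (Finset.erase_subset_erase i (subset_insert a s))) _
    calc #(A a) + ∑ x ∈ s, #(A x)
        ≤ #(A a) + (#(s.biUnion A) + ∑ i ∈ s, ∑ j ∈ s.erase i, #(A i ∩ A j)) :=
          Nat.add_le_add_left ih _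
      _ ≤ #(A a ∪ s.biUnion A) + (∑ j ∈ s, (A a ∩ A j).card
            + ∑ i ∈ s, ∑ j ∈ s.erase i, #(A i ∩ A j)) := by
          have := hcard
          have := hinter
          omega
      _ ≤ #(A a ∪ s.biUnion A) + ∑ i ∈ insert a s, ∑ j ∈ (insert a s).erase i, #(A i ∩ A j) :=
          Nat.add_le_add_left h2 _

variable (F : SimpleGraph V) [DecidableRel F.Adj]

lemma bad_eq_biUnion :
    (univ.filter (fun f : V → Fin n => ¬ ∀ a b, F.Adj a b → f a ≠ f b))
      = F.edgeFinset.biUnion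
          (fun e => univ.filter (fun f : V → Fin n => Sym2.IsDiag (e.map f))) := by
  ext f
  simp only [mem_filter, mem_univ, true_and, mem_biUnion, mem_edgeFinset]
  push_neg
  constructor
  · rintro ⟨a, b, hab, hfab⟩
    exact ⟨s(a, b), (F.mem_edgeSet).2 hab, by simpa using hfab⟩
  · rintro ⟨e, he, hdiag⟩
    induction e with
    | h a b => exact ⟨a, b, (F.mem_edgeSet).1 he, by simpa using hdiag⟩



lemma card_badE_edge (e : Sym2 V) (he : e ∈ F.edgeFinset) :
    (univ.filter (fun f : V → Fin n => Sym2.IsDiag (e.map f))).card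
      = n ^ (Fintype.card V - 1) := by
  induction e with
  | h a b =>
      have hab : a ≠ b := ((F.mem_edgeSet).1 (mem_edgeFinset.1 he)).ne
      have : ∀ f : V → Fin n, Sym2.IsDiag (Sym2.map f s(a,b)) ↔ f a = f b := by
        intro f; simp
      rw [filter_congr (fun f _ => this f)]
      exact card_badE n hab

lemma card_bad2_edges (e e' : Sym2 V) (he : e ∈ F.edgeFinset) (he' : e' ∈ F.edgeFinset)
    (hne : e ≠ e') :
    ((univ.filter (fun f : V → Fin n => Sym2.IsDiag (e.map f)))
      ∩ (univ.filter (fun f : V → Fin n => Sym2.IsDiag (e'.map f)))).card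
      ≤ n ^ (Fintype.card V - 2) := by
  induction e with
  | h a b =>
    induction e' with
    | h c d =>
      have hab : a ≠ b := ((F.mem_edgeSet).1 (mem_edgeFinset.1 he)).ne
      have hcd : c ≠ d := ((F.mem_edgeSet).1 (mem_edgeFinset.1 he')).ne
      have hset : ((univ.filter (fun f : V → Fin n => Sym2.IsDiag (Sym2.map f s(a,b))))
          ∩ (univ.filter (fun f : V → Fin n => Sym2.IsDiag (Sym2.map f s(c,d)))))
          = univ.filter (fun f : V → Fin n => f a = f b ∧ f c = f d) := by
        ext f; simp
      rw [hset]
      by_cases hd : d = a ∨ d = b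
      · -- then c ∉ {a, b}
        have hca : c ≠ a ∧ c ≠ b := by
          rcases hd with rfl | rfl
          · constructor
            · exact fun h => hcd (h.symm ▸ rfl) |>.elim
            · intro h; subst h
              exact hne (by rw [Sym2.eq_swap])
          · constructor
            · intro h; subst h
              exact hne rfl
            · exact fun h => hcd (h.symm ▸ rfl) |>.elim
        have hswap : ∀ f : V → Fin n, (f a = f b ∧ f c = f d) ↔ (f b = f a ∧ f d = f c) :=
          fun f => ⟨fun ⟨h1, h2⟩ => ⟨h1.symm, h2.symm⟩, fun ⟨h1, h2⟩ => ⟨h1.symm, h2.symm⟩⟩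
        rw [filter_congr (fun f _ => hswap f)]
        exact card_bad2 n hab.symm hcd.symm hca.2 hca.1
      · push_neg at hd
        exact card_bad2 n hab hcd hd.1 hd.2

lemma hom_top_lower :
    n ^ (Fintype.card V) ≤ Nat.card (F →g (⊤ : SimpleGraph (Fin n)))
      + F.edgeFinset.card * n ^ (Fintype.card V - 1) := by
  rw [hom_top_card]
  have hsplit : (univ.filter (fun f : V → Fin n => ∀ a b, F.Adj a b → f a ≠ f b)).card
      + (univ.filter (fun f : V → Fin n => ¬ ∀ a b, F.Adj a b → f a ≠ f b)).card
      = n ^ (Fintype.card V) := by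
    rw [card_filter_add_card_filter_not, card_univ, Fintype.card_fun, Fintype.card_fin]
  have hbad : (univ.filter (fun f : V → Fin n => ¬ ∀ a b, F.Adj a b → f a ≠ f b)).card
      ≤ F.edgeFinset.card * n ^ (Fintype.card V - 1) := by
    rw [bad_eq_biUnion]
    calc _ ≤ ∑ e ∈ F.edgeFinset,
        (univ.filter (fun f : V → Fin n => Sym2.IsDiag (e.map f))).card := card_biUnion_le
      _ = F.edgeFinset.card * n ^ (Fintype.card V - 1) := by
          rw [sum_congr rfl (fun e he => card_badE_edge n F e he), sum_const, smul_eq_mul]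
  rw [← hsplit]
  exact Nat.add_le_add_left hbad _

lemma hom_top_upper :
    Nat.card (F →g (⊤ : SimpleGraph (Fin n)))
      + F.edgeFinset.card * n ^ (Fintype.card V - 1)
    ≤ n ^ (Fintype.card V) + F.edgeFinset.card ^ 2 * n ^ (Fintype.card V - 2) := by
  rw [hom_top_card]
  have hsplit : (univ.filter (fun f : V → Fin n => ∀ a b, F.Adj a b → f a ≠ f b)).card
      + (univ.filter (fun f : V → Fin n => ¬ ∀ a b, F.Adj a b → f a ≠ f b)).card
      = n ^ (Fintype.card V) := by
    rw [card_filter_add_card_filter_not, card_univ, Fintype.card_fun, Fintype.card_fin]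
  have hbon := bonferroni (fun e : Sym2 V =>
      univ.filter (fun f : V → Fin n => Sym2.IsDiag (e.map f))) F.edgeFinset
  rw [← bad_eq_biUnion] at hbon
  have hsum : ∑ e ∈ F.edgeFinset,
      (univ.filter (fun f : V → Fin n => Sym2.IsDiag (e.map f))).card
      = F.edgeFinset.card * n ^ (Fintype.card V - 1) := by
    rw [sum_congr rfl (fun e he => card_badE_edge n F e he), sum_const, smul_eq_mul]
  have hpairs : ∑ e ∈ F.edgeFinset, ∑ e' ∈ F.edgeFinset.erase e,
      ((univ.filter (fun f : V → Fin n => Sym2.IsDiag (e.map f)))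
        ∩ (univ.filter (fun f : V → Fin n => Sym2.IsDiag (e'.map f)))).card
      ≤ F.edgeFinset.card ^ 2 * n ^ (Fintype.card V - 2) := by
    calc _ ≤ ∑ _e ∈ F.edgeFinset, ∑ _e' ∈ F.edgeFinset.erase _e, n ^ (Fintype.card V - 2) := by
          refine sum_le_sum fun e he => sum_le_sum fun e' he' => ?_
          exact card_bad2_edges n F e e' he (mem_of_mem_erase he') (ne_of_mem_erase he').symm
      _ ≤ ∑ _e ∈ F.edgeFinset, F.edgeFinset.card * n ^ (Fintype.card V - 2) := by
          refine sum_le_sum fun e _ => ?_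
          rw [sum_const, smul_eq_mul]
          exact Nat.mul_le_mul_right _ card_erase_le
      _ = F.edgeFinset.card ^ 2 * n ^ (Fintype.card V - 2) := by
          rw [sum_const, smul_eq_mul]; ring
  rw [hsum] at hbon
  linarith

lemma hom_top_lower_real (hn : 0 < n) (hV : 1 ≤ Fintype.card V) :
    (1 - (F.edgeFinset.card : ℝ)/n) * (n:ℝ)^(Fintype.card V)
      ≤ (Nat.card (F →g (⊤ : SimpleGraph (Fin n))) : ℝ) := by
  have h := hom_top_lower (n := n) (F := F)
  have hx : (n:ℝ) ≠ 0 := Nat.cast_ne_zero.2 hn.ne'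
  have hv1 : (n:ℝ)^(Fintype.card V - 1) * n = (n:ℝ)^(Fintype.card V) := by
    rw [← pow_succ]; congr 1; omega
  have hcast : ((n:ℝ))^(Fintype.card V) ≤ (Nat.card (F →g (⊤ : SimpleGraph (Fin n))) : ℝ)
      + (F.edgeFinset.card:ℝ) * (n:ℝ)^(Fintype.card V - 1) := by exact_mod_cast h
  have p1 : ((F.edgeFinset.card:ℝ)/n) * (n:ℝ)^(Fintype.card V)
      = (F.edgeFinset.card:ℝ) * (n:ℝ)^(Fintype.card V - 1) := by
    rw [← hv1]; field_simp
  calc (1 - (F.edgeFinset.card : ℝ)/n) * (n:ℝ)^(Fintype.card V)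
      = (n:ℝ)^(Fintype.card V) - ((F.edgeFinset.card:ℝ)/n) * (n:ℝ)^(Fintype.card V) := by ring
    _ = (n:ℝ)^(Fintype.card V) - (F.edgeFinset.card:ℝ) * (n:ℝ)^(Fintype.card V - 1) := by rw [p1]
    _ ≤ _ := by linarith [hcast]

lemma hom_top_upper_real (hn : 0 < n) (hV : 2 ≤ Fintype.card V) :
    (Nat.card (F →g (⊤ : SimpleGraph (Fin n))) : ℝ)
      ≤ (1 - (F.edgeFinset.card : ℝ)/n + (F.edgeFinset.card : ℝ)^2/n^2) * (n:ℝ)^(Fintype.card V) := by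
  have h := hom_top_upper (n := n) (F := F)
  have hx : (n:ℝ) ≠ 0 := Nat.cast_ne_zero.2 hn.ne'
  have hv1 : (n:ℝ)^(Fintype.card V - 1) * n = (n:ℝ)^(Fintype.card V) := by
    rw [← pow_succ]; congr 1; omega
  have hv2 : (n:ℝ)^(Fintype.card V - 2) * n^2 = (n:ℝ)^(Fintype.card V) := by
    rw [← pow_add]; congr 1; omega
  have hcast : (Nat.card (F →g (⊤ : SimpleGraph (Fin n))) : ℝ)
      + (F.edgeFinset.card:ℝ) * (n:ℝ)^(Fintype.card V - 1)
      ≤ ((n:ℝ))^(Fintype.card V) + (F.edgeFinset.card:ℝ)^2 * (n:ℝ)^(Fintype.card V - 2) := by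
    exact_mod_cast h
  have p1 : ((F.edgeFinset.card:ℝ)/n) * (n:ℝ)^(Fintype.card V)
      = (F.edgeFinset.card:ℝ) * (n:ℝ)^(Fintype.card V - 1) := by
    rw [← hv1]; field_simp
  have p2 : ((F.edgeFinset.card:ℝ)^2/n^2) * (n:ℝ)^(Fintype.card V)
      = (F.edgeFinset.card:ℝ)^2 * (n:ℝ)^(Fintype.card V - 2) := by
    rw [← hv2]; field_simp
  calc (Nat.card (F →g (⊤ : SimpleGraph (Fin n))) : ℝ)
      ≤ (n:ℝ)^(Fintype.card V) - (F.edgeFinset.card:ℝ) * (n:ℝ)^(Fintype.card V - 1)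
        + (F.edgeFinset.card:ℝ)^2 * (n:ℝ)^(Fintype.card V - 2) := by linarith [hcast]
    _ = (1 - (F.edgeFinset.card : ℝ)/n + (F.edgeFinset.card : ℝ)^2/n^2) * (n:ℝ)^(Fintype.card V) := by
        rw [show (1 - (F.edgeFinset.card : ℝ)/n + (F.edgeFinset.card : ℝ)^2/n^2) * (n:ℝ)^(Fintype.card V)
          = (n:ℝ)^(Fintype.card V) - ((F.edgeFinset.card:ℝ)/n) * (n:ℝ)^(Fintype.card V)
            + ((F.edgeFinset.card:ℝ)^2/n^2) * (n:ℝ)^(Fintype.card V) from by ring, p1, p2]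


end counting


/-- Clique on the first `m` vertices, rest isolated. -/
def sideGraph (m n : ℕ) : SimpleGraph (Fin n) where
  Adj x y := x ≠ y ∧ x.val < m ∧ y.val < m
  symm := ⟨fun x y ⟨h1, h2, h3⟩ => ⟨h1.symm, h3, h2⟩⟩
  loopless := ⟨fun x h => h.1 rfl⟩

/-- Two disjoint cliques of size `m`. -/
def twoCliques (m : ℕ) : SimpleGraph (Fin (2*m)) where
  Adj x y := x ≠ y ∧ (x.val < m ↔ y.val < m)
  symm := ⟨fun x y ⟨h1, h2⟩ => ⟨h1.symm, h2.symm⟩⟩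
  loopless := ⟨fun x h => h.1 rfl⟩

section sidecount
variable {V : Type*} [Fintype V] (G : SimpleGraph V)

lemma exists_adj (hconn : G.Connected) (h2 : 2 ≤ Fintype.card V) (x : V) :
    ∃ y, G.Adj x y := by
  obtain ⟨y, hy⟩ := Fintype.exists_ne_of_one_lt_card (by omega) x
  obtain ⟨w⟩ := hconn x y
  cases w with
  | nil => exact absurd rfl hy
  | cons h p => exact ⟨_, h⟩

lemma nonempty_of_two (h2 : 2 ≤ Fintype.card V) : Nonempty V :=
  Fintype.card_pos_iff.1 (by omega)


lemma side_upper (hconn : G.Connected) (h2 : 2 ≤ Fintype.card V) (m n : ℕ) :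
    Nat.card (G →g sideGraph m n) ≤ m ^ Fintype.card V := by
  classical
  have : Nat.card (G →g sideGraph m n) ≤ Nat.card (V → Fin m) := by
    apply Nat.card_le_card_of_injective
      (f := fun f : G →g sideGraph m n => fun a : V =>
        (⟨(f a).val, by
          obtain ⟨y, hy⟩ := exists_adj G hconn h2 a
          exact (f.map_rel hy).2.1⟩ : Fin m))
    intro f g hfg
    ext a
    simpa [Fin.ext_iff] using congrFun hfg a
  simpa [Nat.card_eq_fintype_card] using this

lemma side_lower (m n : ℕ) (hmn : m ≤ n) :
    (m + 1 - Fintype.card V) ^ Fintype.card V ≤ Nat.card (G →g sideGraph m n) := by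
  classical
  have key : Nat.card (V ↪ Fin m) ≤ Nat.card (G →g sideGraph m n) := by
    apply Nat.card_le_card_of_injective
      (f := fun e : V ↪ Fin m =>
        (⟨fun a => Fin.castLE hmn (e a), by
          intro a b hab
          refine ⟨?_, (e a).2, (e b).2⟩
          simp only [ne_eq, Fin.ext_iff, Fin.coe_castLE]
          exact fun h => hab.ne (e.injective (Fin.ext h))⟩ : G →g sideGraph m n))
    intro e e' hee
    ext a
    have := congrFun (congrArg (DFunLike.coe) hee) a
    have h2 : ((Fin.castLE hmn (e a) : Fin n) : ℕ) = (Fin.castLE hmn (e' a) : Fin n) :=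
      congrArg Fin.val this
    exact h2
  refine le_trans ?_ key
  rw [Nat.card_eq_fintype_card, Fintype.card_embedding_eq, Fintype.card_fin]
  exact Nat.pow_sub_le_descFactorial m (Fintype.card V)

end sidecount

section two
variable {V : Type*} [Fintype V] (G : SimpleGraph V)


lemma side_const (m : ℕ) (hconn : G.Connected) (f : G →g twoCliques m) (a b : V) :
    ((f a).val < m ↔ (f b).val < m) := by
  obtain ⟨w⟩ := hconn a b
  induction w with
  | nil => exact Iff.rfl
  | cons h p ih => exact (f.map_rel h).2.trans ih

lemma two_upper (hconn : G.Connected) (h2 : 2 ≤ Fintype.card V) (m : ℕ) :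
    Nat.card (G →g twoCliques m) ≤ 2 * m ^ Fintype.card V := by
  classical
  obtain ⟨x₀⟩ := Fintype.card_pos_iff.1 (show 0 < Fintype.card V by omega)
  have : Nat.card (G →g twoCliques m) ≤ Nat.card (Bool × (V → Fin m)) := by
    apply Nat.card_le_card_of_injective
      (f := fun f : G →g twoCliques m =>
        ((decide ((f x₀).val < m)),
         fun a : V => (⟨if (f a).val < m then (f a).val else (f a).val - m, by
            have := (f a).2
            split
            · assumption
            · omega⟩ : Fin m)))
    intro f g hfg
    have hb : ((f x₀).val < m ↔ (g x₀).val < m) := by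
      have := congrArg Prod.fst hfg
      simpa [decide_eq_decide] using this
    ext a
    have hside : ((f a).val < m ↔ (g a).val < m) :=
      ((side_const G m hconn f a x₀).trans hb).trans (side_const G m hconn g x₀ a)
    have hv := congrArg Fin.val (congrFun (congrArg Prod.snd hfg) a)
    simp only at hv
    by_cases hfa : (f a).val < m
    · rw [if_pos hfa, if_pos (hside.1 hfa)] at hv
      exact hv
    · rw [if_neg hfa, if_neg (fun h => hfa (hside.2 h))] at hv
      have h2m := (f a).2
      have h2m' := (g a).2
      push_neg at hfa
      have hga : ¬ (g a).val < m := fun h => by omega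
      push_neg at hga
      omega
  simpa [Nat.card_eq_fintype_card, Fintype.card_fun] using this

lemma two_lower (h2 : 2 ≤ Fintype.card V) (m : ℕ) :
    2 * (m + 1 - Fintype.card V) ^ Fintype.card V ≤ Nat.card (G →g twoCliques m) := by
  classical
  obtain ⟨x₀⟩ := Fintype.card_pos_iff.1 (show 0 < Fintype.card V by omega)
  have key : Nat.card (Bool × (V ↪ Fin m)) ≤ Nat.card (G →g twoCliques m) := by
    apply Nat.card_le_card_of_injective
      (f := fun p : Bool × (V ↪ Fin m) =>
        (⟨fun a => (⟨(p.2 a).val + (if p.1 then m else 0), by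
            have := (p.2 a).2
            split <;> omega⟩ : Fin (2*m)), by
          intro a b hab
          constructor
          · simp only [ne_eq, Fin.mk.injEq]
            intro h
            have : (p.2 a) = (p.2 b) := Fin.ext (by omega)
            exact hab.ne (p.2.injective this)
          · have ha := (p.2 a).2
            have hb := (p.2 b).2
            split <;> simp <;> omega⟩ : G →g twoCliques m))
    rintro ⟨b1, e1⟩ ⟨b2, e2⟩ hp
    have hval : ∀ a : V, (e1 a).val + (if b1 then m else 0)
        = (e2 a).val + (if b2 then m else 0) := by
      intro a
      exact congrArg Fin.val (congrFun (congrArg DFunLike.coe hp) a)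
    have hb : b1 = b2 := by
      have hx := hval x₀
      have h1 := (e1 x₀).2
      have h2 := (e2 x₀).2
      cases b1 <;> cases b2 <;> simp at hx <;> first | rfl | omega
    subst hb
    have he : e1 = e2 := by
      ext a
      have := hval a
      omega
    rw [he]
  refine le_trans ?_ key
  rw [Nat.card_eq_fintype_card, Fintype.card_prod, Fintype.card_bool,
    Fintype.card_embedding_eq, Fintype.card_fin]
  exact Nat.mul_le_mul_left 2 (Nat.pow_sub_le_descFactorial m (Fintype.card V))

end two

open Filter Topology

section density
variable {V : Type*} [Fintype V] (F : SimpleGraph V) {n : ℕ} (T : SimpleGraph (Fin n))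

lemma homDensity_eq :
    homDensity F T = (Nat.card (F →g T) : ℝ) / (n:ℝ) ^ Fintype.card V := by
  simp [homDensity]

lemma hom_card_le_pow : (Nat.card (F →g T)) ≤ n ^ Fintype.card V := by
  classical
  have h := Nat.card_le_card_of_injective
    (fun f : F →g T => (f : V → Fin n)) DFunLike.coe_injective
  have h2 : Nat.card (V → Fin n) = n ^ Fintype.card V := by
    rw [Nat.card_eq_fintype_card, Fintype.card_fun, Fintype.card_fin]
  omega

lemma homDensity_le_one_s3 : homDensity F T ≤ 1 := by
  rw [homDensity_eq]
  apply div_le_one_of_le₀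
  · exact_mod_cast hom_card_le_pow F T
  · positivity

end density

theorem stmt_3 {α β : Type*} [Fintype α] [Fintype β]
    (G : SimpleGraph α) (H : SimpleGraph β)
    (hGconn : G.Connected) (hHconn : H.Connected)
    (hGcard : 2 ≤ Fintype.card α) (hHcard : 2 ≤ Fintype.card β)
    (c : ℝ)
    (hc : ∀ (n : ℕ), 0 < n → ∀ T : SimpleGraph (Fin n),
      homDensity H T ^ c ≤ homDensity G T) :
    (Nat.card G.edgeSet : ℝ) / (Nat.card H.edgeSet : ℝ) ≤ c ∧
    ((Fintype.card α : ℝ) - 1) / ((Fintype.card β : ℝ) - 1) ≤ c ∧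
    (Fintype.card α : ℝ) / (Fintype.card β : ℝ) ≤ c := by
  classical
  obtain ⟨x₀⟩ : Nonempty α := nonempty_of_two hGcard
  obtain ⟨y₀⟩ : Nonempty β := nonempty_of_two hHcard
  set vG := Fintype.card α with hvGdef
  set vH := Fintype.card β with hvHdef
  set eG := Nat.card G.edgeSet with heGdef
  set eH := Nat.card H.edgeSet with heHdef
  have heGfin : G.edgeFinset.card = eG := by
    rw [edgeFinset_card, heGdef, Nat.card_eq_fintype_card]
  have heHfin : H.edgeFinset.card = eH := by
    rw [edgeFinset_card, heHdef, Nat.card_eq_fintype_card]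
  have heG1 : 1 ≤ eG := by
    obtain ⟨y, hy⟩ := exists_adj G hGconn hGcard x₀
    have : Nonempty ↥G.edgeSet := ⟨⟨s(x₀,y), (G.mem_edgeSet).2 hy⟩⟩
    exact Nat.card_pos
  have heH1 : 1 ≤ eH := by
    obtain ⟨y, hy⟩ := exists_adj H hHconn hHcard y₀
    have : Nonempty ↥H.edgeSet := ⟨⟨s(y₀,y), (H.mem_edgeSet).2 hy⟩⟩
    exact Nat.card_pos
  have hvHR : (0:ℝ) < vH := by exact_mod_cast (by omega : 0 < vH)
  have hlog2 : 0 < Real.log 2 := Real.log_pos (by norm_num)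
  -- c is positive
  have hc0 : 0 < c := by
    rcases lt_or_ge 0 c with h | h
    · exact h
    exfalso
    have h2m : 0 < 2*vH := by omega
    have hineq := hc (2*vH) h2m (sideGraph vH (2*vH))
    have hHlow : (0:ℝ) < homDensity H (sideGraph vH (2*vH)) := by
      rw [homDensity_eq]
      apply div_pos ?_ (by positivity)
      have hcard := side_lower H vH (2*vH) (by omega)
      have h1 : 0 < (vH + 1 - vH)^vH := by simp
      exact_mod_cast lt_of_lt_of_le h1 hcard
    have hHle1 := homDensity_le_one_s3 H (sideGraph vH (2*vH))
    have h1 := Real.one_le_rpow_of_pos_of_le_one_of_nonpos hHlow hHle1 h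
    have hGup : homDensity G (sideGraph vH (2*vH)) < 1 := by
      rw [homDensity_eq, div_lt_one (by positivity)]
      have hcard := side_upper G hGconn hGcard vH (2*vH)
      have hlt : vH^vG < (2*vH)^vG := Nat.pow_lt_pow_left (by omega) (by omega)
      calc (Nat.card (G →g sideGraph vH (2*vH)) : ℝ) ≤ ((vH^vG : ℕ):ℝ) := by
            exact_mod_cast hcard
        _ < (((2*vH)^vG : ℕ):ℝ) := by exact_mod_cast hlt
        _ = ((2*vH:ℕ):ℝ)^vG := by push_cast; ring
    linarith [le_trans h1 hineq]
  -- the sequence (m+1-vH)/(2m) and its log limit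
  have hq_t : Tendsto (fun m : ℕ => ((m:ℝ) + 1 - (vH:ℝ))/(2*m)) atTop (nhds (1/2)) := by
    have t1 : Tendsto (fun m : ℕ => 1/2 + ((1 - (vH:ℝ))/2) * (1/m)) atTop (nhds (1/2)) := by
      have h2 := (tendsto_one_div_atTop_nhds_zero_nat.const_mul ((1 - (vH:ℝ))/2)).const_add (1/2:ℝ)
      simpa using h2
    apply t1.congr'
    filter_upwards [Filter.eventually_gt_atTop 0] with m hm
    have hm0 : (m:ℝ) ≠ 0 := Nat.cast_ne_zero.2 hm.ne'
    field_simp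
    ring
  have hlq_t : Tendsto (fun m : ℕ => Real.log (((m:ℝ) + 1 - (vH:ℝ))/(2*m))) atTop
      (nhds (-(Real.log 2))) := by
    have hcont := (Real.continuousAt_log (x := (1/2:ℝ)) (by norm_num)).tendsto
    have h2 := hcont.comp hq_t
    have : Real.log (1/2 : ℝ) = -(Real.log 2) := by rw [one_div, Real.log_inv]
    rw [this] at h2
    exact h2
  -- basic facts about q m for m ≥ vH + 1
  have hq_pos : ∀ m : ℕ, vH + 1 ≤ m → (0:ℝ) < ((m:ℝ) + 1 - (vH:ℝ))/(2*m) := by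
    intro m hm
    have hmR : (vH:ℝ) + 1 ≤ (m:ℝ) := by exact_mod_cast hm
    have hm0 : (0:ℝ) < m := by
      have : 0 < m := by omega
      exact_mod_cast this
    apply div_pos <;> linarith
  have hqcast : ∀ m : ℕ, vH + 1 ≤ m → ((m + 1 - vH : ℕ) : ℝ) = (m:ℝ) + 1 - (vH:ℝ) := by
    intro m hm
    have : vH ≤ m + 1 := by omega
    push_cast [Nat.cast_sub this]
    ring
  ------------------------------------------------------------------
  -- PART 3 : vG / vH ≤ c
  ------------------------------------------------------------------
  have part3 : (vG:ℝ)/(vH:ℝ) ≤ c := by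
    have key : ∀ m : ℕ, vH + 1 ≤ m →
        c * ((vH:ℝ) * Real.log (((m:ℝ) + 1 - (vH:ℝ))/(2*m))) ≤ (vG:ℝ) * -(Real.log 2) := by
      intro m hm
      have h2m : 0 < 2*m := by omega
      have hineq := hc (2*m) h2m (sideGraph m (2*m))
      have hq := hq_pos m hm
      have hHlow : (((m:ℝ) + 1 - (vH:ℝ))/(2*m))^vH ≤ homDensity H (sideGraph m (2*m)) := by
        rw [homDensity_eq, le_div_iff₀ (by positivity)]
        have hcard := side_lower H m (2*m) (by omega)
        have hrw : ((((m:ℝ) + 1 - (vH:ℝ))/(2*m))^vH) * (((2*m:ℕ)):ℝ)^vH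
            = ((m:ℝ) + 1 - (vH:ℝ))^vH := by
          have hm0 : ((2:ℝ)*m) ≠ 0 := by
            have : (0:ℝ) < m := by exact_mod_cast (by omega : 0 < m)
            positivity
          rw [div_pow]
          push_cast
          field_simp
          exact mul_div_cancel_right₀ _ (pow_ne_zero _ (by rwa [mul_comm] at hm0))
        rw [hrw, ← hqcast m hm]
        exact_mod_cast hcard
      have hGup : homDensity G (sideGraph m (2*m)) ≤ (1/2:ℝ)^vG := by
        rw [homDensity_eq, div_le_iff₀ (by positivity)]
        have hcard := side_upper G hGconn hGcard m (2*m)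
        calc (Nat.card (G →g sideGraph m (2*m)) : ℝ) ≤ ((m:ℝ))^vG := by exact_mod_cast hcard
          _ = (1/2:ℝ)^vG * ((2*m:ℕ):ℝ)^vG := by
              rw [← mul_pow]; congr 1; push_cast; ring
      have h1 : ((((m:ℝ) + 1 - (vH:ℝ))/(2*m))^vH)^c ≤ (1/2:ℝ)^vG :=
        le_trans (Real.rpow_le_rpow (by positivity) hHlow hc0.le) (le_trans hineq hGup)
      have hlog := Real.log_le_log (Real.rpow_pos_of_pos (pow_pos hq vH) c) h1
      rw [Real.log_rpow (pow_pos hq vH), Real.log_pow, Real.log_pow,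
        show Real.log (1/2:ℝ) = -(Real.log 2) by rw [one_div, Real.log_inv]] at hlog
      exact hlog
    have hmain : Tendsto (fun m : ℕ => c * ((vH:ℝ) * Real.log (((m:ℝ) + 1 - (vH:ℝ))/(2*m))))
        atTop (nhds (c * ((vH:ℝ) * -(Real.log 2)))) :=
      (hlq_t.const_mul (vH:ℝ)).const_mul c
    have hle := le_of_tendsto hmain (Filter.eventually_atTop.2 ⟨vH+1, key⟩)
    rw [div_le_iff₀ hvHR]
    nlinarith [hle, hlog2]
  ------------------------------------------------------------------
  -- PART 2 : (vG - 1)/(vH - 1) ≤ c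
  ------------------------------------------------------------------
  have part2 : ((vG:ℝ) - 1)/((vH:ℝ) - 1) ≤ c := by
    have key : ∀ m : ℕ, vH + 1 ≤ m →
        c * (Real.log 2 + (vH:ℝ) * Real.log (((m:ℝ) + 1 - (vH:ℝ))/(2*m)))
          ≤ Real.log 2 + (vG:ℝ) * -(Real.log 2) := by
      intro m hm
      have h2m : 0 < 2*m := by omega
      have hineq := hc (2*m) h2m (twoCliques m)
      have hq := hq_pos m hm
      have hHlow : 2*(((m:ℝ) + 1 - (vH:ℝ))/(2*m))^vH ≤ homDensity H (twoCliques m) := by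
        rw [homDensity_eq, le_div_iff₀ (by positivity)]
        have hcard := two_lower H hHcard m
        have hrw : (2*(((m:ℝ) + 1 - (vH:ℝ))/(2*m))^vH) * (((2*m:ℕ)):ℝ)^vH
            = 2*((m:ℝ) + 1 - (vH:ℝ))^vH := by
          have hm0 : ((2:ℝ)*m) ≠ 0 := by
            have : (0:ℝ) < m := by exact_mod_cast (by omega : 0 < m)
            positivity
          rw [div_pow]
          push_cast
          field_simp
        rw [hrw, ← hqcast m hm]
        exact_mod_cast hcard
      have hGup : homDensity G (twoCliques m) ≤ 2*(1/2:ℝ)^vG := by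
        rw [homDensity_eq, div_le_iff₀ (by positivity)]
        have hcard := two_upper G hGconn hGcard m
        calc (Nat.card (G →g twoCliques m) : ℝ) ≤ 2*((m:ℝ))^vG := by exact_mod_cast hcard
          _ = 2*(1/2:ℝ)^vG * ((2*m:ℕ):ℝ)^vG := by
              rw [mul_assoc, ← mul_pow]; congr 2; push_cast; ring
      have h1 : (2*(((m:ℝ) + 1 - (vH:ℝ))/(2*m))^vH)^c ≤ 2*(1/2:ℝ)^vG :=
        le_trans (Real.rpow_le_rpow (by positivity) hHlow hc0.le) (le_trans hineq hGup)
      have hLpos : (0:ℝ) < 2*(((m:ℝ) + 1 - (vH:ℝ))/(2*m))^vH := by positivity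
      have hlog := Real.log_le_log (Real.rpow_pos_of_pos hLpos c) h1
      rw [Real.log_rpow hLpos,
        Real.log_mul (by norm_num) (by positivity), Real.log_pow,
        Real.log_mul (by norm_num) (by positivity), Real.log_pow,
        show Real.log (1/2:ℝ) = -(Real.log 2) by rw [one_div, Real.log_inv]] at hlog
      exact hlog
    have hmain : Tendsto
        (fun m : ℕ => c * (Real.log 2 + (vH:ℝ) * Real.log (((m:ℝ) + 1 - (vH:ℝ))/(2*m))))
        atTop (nhds (c * (Real.log 2 + (vH:ℝ) * -(Real.log 2)))) :=
      (((hlq_t.const_mul (vH:ℝ)).const_add (Real.log 2)).const_mul c)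
    have hle := le_of_tendsto hmain (Filter.eventually_atTop.2 ⟨vH+1, key⟩)
    have hvH1 : (0:ℝ) < (vH:ℝ) - 1 := by
      have : (2:ℝ) ≤ vH := by exact_mod_cast hHcard
      linarith
    rw [div_le_iff₀ hvH1]
    nlinarith [hle, hlog2]
  ------------------------------------------------------------------
  -- PART 1 : eG / eH ≤ c
  ------------------------------------------------------------------
  have part1 : (eG:ℝ)/(eH:ℝ) ≤ c := by
    have heHR : (0:ℝ) < eH := by exact_mod_cast (by omega : 0 < eH)
    have key : ∀ n : ℕ, eG + eH + 2 ≤ n →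
        ((eG:ℝ) * (1 - (eG:ℝ) * (1/n)) * (1 - (eH:ℝ) * (1/n))) / (eH:ℝ) ≤ c := by
      intro n hn
      have hn0 : 0 < n := by omega
      have hnR : (0:ℝ) < n := by exact_mod_cast hn0
      have hineq := hc n hn0 ⊤
      have heHn : (eH:ℝ) < n := by exact_mod_cast (by omega : eH < n)
      have heGn : (eG:ℝ) < n := by exact_mod_cast (by omega : eG < n)
      have heGR : (0:ℝ) < eG := by exact_mod_cast (by omega : 0 < eG)
      have hL_pos : (0:ℝ) < 1 - (eH:ℝ)/n := by
        rw [sub_pos, div_lt_one hnR]; exact heHn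
      have hL_lt1 : 1 - (eH:ℝ)/n < 1 := by
        have : 0 < (eH:ℝ)/n := div_pos heHR hnR
        linarith
      have hU_pos : (0:ℝ) < 1 - (eG:ℝ)/n + (eG:ℝ)^2/n^2 := by
        have hx : (eG:ℝ)^2/n^2 = ((eG:ℝ)/n)^2 := by rw [div_pow]
        rw [hx]
        nlinarith [sq_nonneg ((eG:ℝ)/n - 1/2)]
      have hHlow : 1 - (eH:ℝ)/n ≤ homDensity H (⊤ : SimpleGraph (Fin n)) := by
        rw [homDensity_eq, le_div_iff₀ (by positivity)]
        have h := hom_top_lower_real (n := n) (F := H) hn0 (by omega)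
        rw [heHfin] at h
        exact h
      have hGup : homDensity G (⊤ : SimpleGraph (Fin n)) ≤ 1 - (eG:ℝ)/n + (eG:ℝ)^2/n^2 := by
        rw [homDensity_eq, div_le_iff₀ (by positivity)]
        have h := hom_top_upper_real (n := n) (F := G) hn0 (by omega)
        rw [heGfin] at h
        exact h
      have h1 : (1 - (eH:ℝ)/n)^c ≤ 1 - (eG:ℝ)/n + (eG:ℝ)^2/n^2 :=
        le_trans (Real.rpow_le_rpow hL_pos.le hHlow hc0.le) (le_trans hineq hGup)
      have h3 : c * Real.log (1 - (eH:ℝ)/n) ≤ Real.log (1 - (eG:ℝ)/n + (eG:ℝ)^2/n^2) := by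
        have := Real.log_le_log (Real.rpow_pos_of_pos hL_pos c) h1
        rwa [Real.log_rpow hL_pos] at this
      have hlogL_neg : Real.log (1 - (eH:ℝ)/n) < 0 := Real.log_neg hL_pos hL_lt1
      -- bound the numerator and denominator
      have hA_le : (eG:ℝ)/n - (eG:ℝ)^2/n^2 ≤ -Real.log (1 - (eG:ℝ)/n + (eG:ℝ)^2/n^2) := by
        have := Real.log_le_sub_one_of_pos hU_pos
        linarith
      have hA_nonneg : (0:ℝ) ≤ (eG:ℝ)/n - (eG:ℝ)^2/n^2 := by
        have hx1 : (eG:ℝ)/n ≤ 1 := by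
          rw [div_le_one hnR]; linarith
        have hx0 : (0:ℝ) ≤ (eG:ℝ)/n := by positivity
        have : (eG:ℝ)^2/n^2 = ((eG:ℝ)/n)^2 := by rw [div_pow]
        nlinarith
      have hgap : (0:ℝ) < -Real.log (1 - (eH:ℝ)/n) := by linarith
      have hB_ge : -Real.log (1 - (eH:ℝ)/n) ≤ ((eH:ℝ)/n)/(1 - (eH:ℝ)/n) := by
        have h := Real.log_le_sub_one_of_pos (inv_pos.2 hL_pos)
        rw [Real.log_inv] at h
        have he : (1 - (eH:ℝ)/n)⁻¹ - 1 = ((eH:ℝ)/n)/(1 - (eH:ℝ)/n) := by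
          have hne : (n:ℝ) - (eH:ℝ) ≠ 0 := by linarith
          field_simp
          ring
        linarith
      have hdiv : ((eG:ℝ)/n - (eG:ℝ)^2/n^2) / (((eH:ℝ)/n)/(1 - (eH:ℝ)/n))
          ≤ (-Real.log (1 - (eG:ℝ)/n + (eG:ℝ)^2/n^2))/(-Real.log (1 - (eH:ℝ)/n)) :=
        div_le_div₀ (by linarith) hA_le hgap hB_ge
      have hratio : (-Real.log (1 - (eG:ℝ)/n + (eG:ℝ)^2/n^2))/(-Real.log (1 - (eH:ℝ)/n)) ≤ c := by
        rw [neg_div_neg_eq]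
        exact (div_le_iff_of_neg hlogL_neg).2 (by linarith [h3])
      have heq : ((eG:ℝ) * (1 - (eG:ℝ) * (1/n)) * (1 - (eH:ℝ) * (1/n))) / (eH:ℝ)
          = ((eG:ℝ)/n - (eG:ℝ)^2/n^2) / (((eH:ℝ)/n)/(1 - (eH:ℝ)/n)) := by
        have h2' : (n:ℝ) ≠ 0 := hnR.ne'
        have h1' : (eH:ℝ) ≠ 0 := heHR.ne'
        have h3' : 1 - (eH:ℝ)/n ≠ 0 := hL_pos.ne'
        field_simp
      rw [heq]
      linarith [hdiv, hratio]
    have t1 : Tendsto (fun n : ℕ => 1 - (eG:ℝ) * (1/n)) atTop (nhds 1) := by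
      have h2 := (tendsto_one_div_atTop_nhds_zero_nat.const_mul (eG:ℝ)).const_sub (1:ℝ)
      simpa using h2
    have t2 : Tendsto (fun n : ℕ => 1 - (eH:ℝ) * (1/n)) atTop (nhds 1) := by
      have h2 := (tendsto_one_div_atTop_nhds_zero_nat.const_mul (eH:ℝ)).const_sub (1:ℝ)
      simpa using h2
    have hmain : Tendsto (fun n : ℕ => ((eG:ℝ) * (1 - (eG:ℝ) * (1/n)) * (1 - (eH:ℝ) * (1/n))) / (eH:ℝ))
        atTop (nhds (((eG:ℝ) * 1 * 1) / (eH:ℝ))) :=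
      ((t1.const_mul (eG:ℝ)).mul t2).div_const (eH:ℝ)
    have hle := le_of_tendsto hmain (Filter.eventually_atTop.2 ⟨eG + eH + 2, key⟩)
    calc (eG:ℝ)/(eH:ℝ) = ((eG:ℝ) * 1 * 1) / (eH:ℝ) := by ring
      _ ≤ c := hle
  exact ⟨part1, part2, part3⟩
end
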